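/- For all natural numbers h ≤ k and all i ≥ 0: ψ(h,k+i) = φ^i(ψ(h,k)), and ψ(h+i,k+i) = φ_R^i(ψ(h,k)·k⁻¹) · (k+i), i.e., the word ψ(h+i,k+i) is obtained by applying the reversed morphism φ_R i times to ψ(h,k) with its last letter (which is k) removed, and then appending the single letter k+i. -/
import Mathlib


/-- S⁻¹: move the last letter of a nonempty word to the front. -/
def sInv (w : List ℕ) : List ℕ := w.rotate (w.length - 1)

/-- Apply a substitution `f` letterwise to a word (the morphism determined by `f`). -/
def applyM (f : ℕ → List ℕ) (w : List ℕ) : List ℕ := (w.map f).flatten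

/-- Fuel-indexed approximation of the morphism φ: `phiAux n` agrees with φ on all
letters `c < n`.  (Computing φ^c(00) only uses φ on letters smaller than `c`, so the
recursion is well-founded in the fuel.) -/
def phiAux : ℕ → ℕ → List ℕ
  | 0, _ => []
  | n + 1, c => sInv ((applyM (phiAux n))^[c] [0, 0]) ++ [c + 1]

/-- The morphism φ on letters: φ(h) = S⁻¹(φ^h(00))·(h+1).
In particular φ(0) = 001 and φ(1) = 1001002. -/
def phi (c : ℕ) : List ℕ := phiAux (c + 1) c

/-- The morphism φ on words. -/
def phiW (w : List ℕ) : List ℕ := applyM phi w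

/-- ψ(h,k) = φ^(k−h)(h). -/
def psi (h k : ℕ) : List ℕ := phiW^[k - h] [h]

/-- The reversed morphism φ_R = R ∘ φ ∘ R, sending each letter c to the reversal
of φ(c). -/
def phiR (w : List ℕ) : List ℕ := (phiW w.reverse).reverse

lemma applyM_append (f : ℕ → List ℕ) (a b : List ℕ) :
    applyM f (a ++ b) = applyM f a ++ applyM f b := by simp [applyM]

lemma applyM_singleton (f : ℕ → List ℕ) (c : ℕ) : applyM f [c] = f c := by simp [applyM]

lemma applyM_nil (f : ℕ → List ℕ) : applyM f [] = [] := rfl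

lemma applyM_congr {f g : ℕ → List ℕ} {w : List ℕ} (h : ∀ a ∈ w, f a = g a) :
    applyM f w = applyM g w := by simp [applyM, List.map_congr_left h]

lemma phiW_append (a b : List ℕ) : phiW (a ++ b) = phiW a ++ phiW b := applyM_append _ _ _

lemma phiW_singleton (c : ℕ) : phiW [c] = phi c := applyM_singleton _ _

lemma phiW_nil : phiW [] = [] := rfl

lemma phiW_cons (c : ℕ) (w : List ℕ) : phiW (c :: w) = phi c ++ phiW w := by
  simp [phiW, applyM]

lemma phiR_append (a b : List ℕ) : phiR (a ++ b) = phiR a ++ phiR b := by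
  simp [phiR, phiW_append]

lemma phiR_nil : phiR [] = [] := rfl

lemma phiR_singleton (c : ℕ) : phiR [c] = (phi c).reverse := by
  simp [phiR, phiW_singleton]

lemma phiR_reverse (w : List ℕ) : (phiR w).reverse = phiW w.reverse := by simp [phiR]

lemma phiW_reverse (w : List ℕ) : (phiW w).reverse = phiR w.reverse := by simp [phiR]

lemma iterate_phiW_append (j : ℕ) (a b : List ℕ) :
    phiW^[j] (a ++ b) = phiW^[j] a ++ phiW^[j] b := by
  induction j generalizing a b with
  | zero => rfl
  | succ j ih => rw [Function.iterate_succ_apply, Function.iterate_succ_apply,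
      Function.iterate_succ_apply, phiW_append, ih]

lemma mem_phiW {a : ℕ} {w : List ℕ} (h : a ∈ phiW w) : ∃ b ∈ w, a ∈ phi b := by
  simpa [phiW, applyM, List.mem_flatten] using h

lemma mem_sInv {a : ℕ} {w : List ℕ} (h : a ∈ sInv w) : a ∈ w := by
  simpa [sInv] using h

lemma sInv_concat (u : List ℕ) (x : ℕ) : sInv (u ++ [x]) = x :: u := by
  have : sInv (u ++ [x]) = (u ++ [x]).rotate u.length := by
    simp [sInv]
  rw [this, List.rotate_append_length_eq]
  rfl

/-- Main fuel lemma: closed form of phi, letter bounds, fuel irrelevance. -/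
lemma phi_main : ∀ c, (phi c = sInv (phiW^[c] [0,0]) ++ [c+1]) ∧
    (∀ a ∈ phi c, a ≤ c + 1) ∧ (∀ n, c < n → phiAux n c = phi c) := by
  intro c
  induction c using Nat.strong_induction_on with
  | _ c IH =>
  have hlet : ∀ j, j ≤ c → ∀ a ∈ phiW^[j] [0,0], a ≤ j := by
    intro j
    induction j with
    | zero => intro _ a ha; simp at ha; omega
    | succ j ihj =>
      intro hj a ha
      rw [Function.iterate_succ_apply'] at ha
      obtain ⟨b, hb, hab⟩ := mem_phiW ha
      have hbj : b ≤ j := ihj (by omega) b hb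
      have := (IH b (by omega)).2.1 a hab
      omega
  have hiter : ∀ m, c ≤ m → ∀ j, j ≤ c → (applyM (phiAux m))^[j] [0,0] = phiW^[j] [0,0] := by
    intro m hm j
    induction j with
    | zero => intro _; rfl
    | succ j ihj =>
      intro hj
      rw [Function.iterate_succ_apply', Function.iterate_succ_apply', ihj (by omega)]
      exact applyM_congr fun a ha => (IH a (by have := hlet j (by omega) a ha; omega)).2.2 m
        (by have := hlet j (by omega) a ha; omega)
  have hmain : ∀ n, c < n → phiAux n c = sInv (phiW^[c] [0,0]) ++ [c+1] := by
    intro n hn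
    obtain ⟨m, rfl⟩ : ∃ m, n = m + 1 := ⟨n - 1, by omega⟩
    show sInv ((applyM (phiAux m))^[c] [0, 0]) ++ [c + 1] = _
    rw [hiter m (by omega) c le_rfl]
  have hphi : phi c = sInv (phiW^[c] [0,0]) ++ [c+1] := hmain (c+1) (by omega)
  refine ⟨hphi, ?_, fun n hn => (hmain n hn).trans hphi.symm⟩
  intro a ha
  rw [hphi] at ha
  rcases List.mem_append.1 ha with h | h
  · have := hlet c le_rfl a (mem_sInv h); omega
  · simp at h; omega

lemma phi_eq (c : ℕ) : phi c = sInv (phiW^[c] [0,0]) ++ [c+1] := (phi_main c).1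
lemma phi_letter_le {a c : ℕ} (h : a ∈ phi c) : a ≤ c + 1 := (phi_main c).2.1 a h

def tW (c : ℕ) : List ℕ := phiW^[c] [0]
def dW (c : ℕ) : List ℕ := (tW c).dropLast
def rW (c : ℕ) : List ℕ := phiR^[c] [0,0]

lemma phiR_cons (c : ℕ) (w : List ℕ) : phiR (c :: w) = (phi c).reverse ++ phiR w := by
  rw [show (c :: w) = [c] ++ w from rfl, phiR_append, phiR_singleton]

lemma phiR_rW (c : ℕ) : phiR (rW c) = rW (c+1) := by
  rw [rW, rW, Function.iterate_succ_apply']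

/-- φ(k) = r(k) ++ [k+1], given the K-facts at k. -/
lemma phi_rW {k : ℕ} (K1 : tW k = dW k ++ [k]) (K3 : rW k = [k] ++ tW k ++ dW k) :
    phi k = rW k ++ [k+1] := by
  have h2 : phiW^[k] [0,0] = tW k ++ tW k := by
    have : ([0,0] : List ℕ) = [0] ++ [0] := rfl
    rw [this, iterate_phiW_append]; rfl
  have h3 : tW k ++ tW k = (tW k ++ dW k) ++ [k] := by
    nth_rewrite 2 [K1]
    rw [List.append_assoc]
  rw [phi_eq, h2, h3, sInv_concat, K3]
  simp

lemma comm_letter {b : ℕ} (h1 : phi b = rW b ++ [b+1]) (h2 : phi (b+1) = rW (b+1) ++ [b+2]) :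
    phiR (phi b) = phiW ((phi b).reverse) := by
  rw [h1, phiR_append, phiR_rW, phiR_singleton, h2, List.reverse_append, List.reverse_append]
  simp only [List.reverse_singleton]
  rw [phiW_append, phiW_singleton, h2]
  have : (rW (b+1)).reverse = phiW ((rW b).reverse) := by
    rw [← phiR_rW, phiR_reverse]
  rw [this]
  simp [List.append_assoc]

lemma comm_word {w : List ℕ} (h : ∀ a ∈ w, phiR (phi a) = phiW ((phi a).reverse)) :
    phiR (phiW w) = phiW (phiR w) := by
  induction w with
  | nil => rfl
  | cons b w ih =>
    rw [phiW_cons, phiR_append, phiR_cons, phiW_append,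
      h b (by simp), ih (fun a ha => h a (by simp [ha]))]

/-- The key combinatorial facts, by strong induction. -/
lemma Kfacts : ∀ c, tW c = dW c ++ [c] ∧ (dW c).reverse = dW c ∧
    rW c = [c] ++ tW c ++ dW c ∧
    tW c ++ tW c ++ phiR (dW c) = phiW (dW c) ++ [c] ++ dW c ++ [c] ++ dW c ∧
    (∀ a ∈ dW c, a < c) := by
  intro c
  induction c using Nat.strong_induction_on with
  | _ c IH =>
  match c with
  | 0 =>
    refine ⟨rfl, rfl, rfl, ?_, by simp [dW, tW]⟩
    show [0,0] ++ phiR (dW 0) = phiW (dW 0) ++ _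
    simp [dW, tW, phiR, phiW, applyM]
  | (k+1) =>
    obtain ⟨K1, K2, K3, K4, K5⟩ := IH k (by omega)
    have K4' : dW k ++ k :: (dW k ++ k :: phiR (dW k)) = phiW (dW k) ++ k :: (dW k ++ k :: dW k) := by
      have h := K4; rw [K1] at h; simpa [List.append_assoc] using h
    have hφk' : phi k = k :: (dW k ++ k :: (dW k ++ [k+1])) := by
      have h := phi_rW K1 K3
      rw [K3, K1] at h
      simpa [List.append_assoc] using h
    have hφkrev : (phi k).reverse = (k+1) :: (dW k ++ k :: (dW k ++ [k])) := by
      rw [hφk']; simp [K2, List.append_assoc]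
    have hcomm : phiR (phiW (dW k)) = phiW (phiR (dW k)) := by
      refine comm_word fun a ha => ?_
      have hak : a < k := K5 a ha
      obtain ⟨J1, _, J3, _, _⟩ := IH a (by omega)
      obtain ⟨J1', _, J3', _, _⟩ := IH (a+1) (by omega)
      exact comm_letter (phi_rW J1 J3) (phi_rW J1' J3')
    have ht' : tW (k+1) = phiW (dW k) ++ k :: (dW k ++ k :: (dW k ++ [k+1])) := by
      rw [tW, Function.iterate_succ_apply', ← tW, K1, phiW_append, phiW_singleton, hφk']
    have hD1 : dW (k+1) = phiW (dW k) ++ k :: (dW k ++ k :: dW k) := by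
      rw [dW, ht']
      have : phiW (dW k) ++ k :: (dW k ++ k :: (dW k ++ [k+1]))
          = (phiW (dW k) ++ k :: (dW k ++ k :: dW k)) ++ [k+1] := by
        simp [List.append_assoc]
      rw [this, List.dropLast_concat]
    have hD2 : dW (k+1) = dW k ++ k :: (dW k ++ k :: phiR (dW k)) := by
      rw [hD1]; exact K4'.symm
    have hK1' : tW (k+1) = dW (k+1) ++ [k+1] := by
      rw [ht', hD1]; simp [List.append_assoc]
    have hK2' : (dW (k+1)).reverse = dW (k+1) := by
      conv_lhs => rw [hD2]
      conv_rhs => rw [hD1]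
      simp [phiR_reverse, K2, List.append_assoc]
    have hK3' : rW (k+1) = [k+1] ++ tW (k+1) ++ dW (k+1) := by
      rw [hK1', hD2, ← phiR_rW, K3, K1]
      simp [phiR_append, phiR_cons, phiR_singleton, phiR_nil, hφkrev, List.append_assoc]
    have hφRd' : phiR (dW (k+1)) = phiW (phiR (dW k)) ++ (k+1) :: (dW (k+1) ++ (k+1) :: dW (k+1)) := by
      conv_lhs => rw [hD1]
      conv_rhs => rw [hD2]
      simp [phiR_append, phiR_cons, phiR_singleton, hφkrev, hcomm, List.append_assoc]
    have hφd' : phiW (dW (k+1)) = dW (k+1) ++ (k+1) :: (dW (k+1) ++ (k+1) :: phiW (phiR (dW k))) := by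
      conv_lhs => rw [hD2]
      conv_rhs => rw [hD1]
      simp [phiW_append, phiW_cons, phiW_singleton, hφk', List.append_assoc]
    refine ⟨hK1', hK2', hK3', ?_, ?_⟩
    · rw [hK1', hφRd', hφd']
      simp [List.append_assoc]
    · intro a ha
      rw [hD1] at ha
      simp only [List.mem_append, List.mem_cons, List.mem_singleton] at ha
      rcases ha with h | h | h | h | h
      · obtain ⟨b, hb, hab⟩ := mem_phiW h
        have := K5 b hb; have := phi_letter_le hab; omega
      · omega
      · have := K5 a h; omega
      · omega
      · have := K5 a h; omega

lemma phi_rW_all (c : ℕ) : phi c = rW c ++ [c+1] :=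
  phi_rW (Kfacts c).1 (Kfacts c).2.2.1

lemma comm_all (w : List ℕ) : phiR (phiW w) = phiW (phiR w) :=
  comm_word fun a _ => comm_letter (phi_rW_all a) (phi_rW_all (a+1))

lemma iter_ends (j h : ℕ) : ∃ u, phiW^[j] [h] = u ++ [h + j] := by
  induction j with
  | zero => exact ⟨[], by simp⟩
  | succ j ih =>
    obtain ⟨u, hu⟩ := ih
    refine ⟨phiW u ++ rW (h+j), ?_⟩
    rw [Function.iterate_succ_apply', hu, phiW_append, phiW_singleton, phi_rW_all]
    simp [List.append_assoc, Nat.add_assoc]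

lemma keyL (h : ℕ) : ∀ d, phiW^[d] [h+1] = phiR ((phiW^[d] [h]).dropLast) ++ [h + d + 1] := by
  intro d
  induction d with
  | zero => simp [phiR, phiW, applyM]
  | succ d ih =>
    obtain ⟨u, hu⟩ := iter_ends d h
    have hdrop : (phiW^[d] [h]).dropLast = u := by rw [hu, List.dropLast_concat]
    have h1 : phiW^[d+1] [h] = (phiW u ++ rW (h+d)) ++ [h+d+1] := by
      rw [Function.iterate_succ_apply', hu, phiW_append, phiW_singleton, phi_rW_all]
      simp [List.append_assoc, Nat.add_assoc]
    rw [Function.iterate_succ_apply', ih, phiW_append, phiW_singleton, phi_rW_all, h1,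
      List.dropLast_concat, phiR_append, hdrop, ← comm_all, phiR_rW]
    simp [List.append_assoc, Nat.add_assoc]


/-- For h ≤ k and i ≥ 0: ψ(h,k+i) = φ^i(ψ(h,k)), and ψ(h+i,k+i) is obtained by
applying φ_R i times to ψ(h,k) with its last letter (which is k) removed, then
appending the single letter k+i. -/
theorem psi_shift (h k i : ℕ) (hhk : h ≤ k) :
    psi h (k + i) = phiW^[i] (psi h k) ∧
    psi (h + i) (k + i) = phiR^[i] ((psi h k).dropLast) ++ [k + i] := by
  constructor
  · rw [psi, psi, ← Function.iterate_add_apply]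
    congr 1
    omega
  · induction i with
    | zero =>
      obtain ⟨u, hu⟩ := iter_ends (k - h) h
      have hk : h + (k - h) = k := by omega
      rw [hk] at hu
      simp only [Nat.add_zero, Function.iterate_zero, id_eq]
      rw [psi, hu, List.dropLast_concat]
    | succ i ih =>
      have e1 : k + (i+1) - (h + (i+1)) = k - h := by omega
      have e2 : h + (i+1) = (h+i) + 1 := by omega
      rw [psi, e1, e2, keyL (h+i) (k-h)]
      have e3 : phiW^[k-h] [h+i] = psi (h+i) (k+i) := by
        rw [psi, show k + i - (h + i) = k - h from by omega]
      rw [e3, ih, List.dropLast_concat,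
        show h + i + (k - h) + 1 = k + (i+1) from by omega,
        Function.iterate_succ_apply']
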